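/- The operator norm (largest eigenvalue in absolute value) of the CHSH operator B = A₀⊗B₀ + A₀⊗B₁ + A₁⊗B₀ − A₁⊗B₁, where A₀, A₁, B₀, B₁ are Hermitian 2×2 matrices with A_i² = B_j² = I, is at most 2√2 (Tsirelson's bound). -/

import Mathlib

open Matrix Kronecker

/-!
With `a_i = A_i ⊗ 1` and `b_j = 1 ⊗ B_j` the CHSH operator is `B = a₀b₀ + a₀b₁ + a₁b₀ - a₁b₁`,
built from self-adjoint involutions where each `a_i` commutes with each `b_j`, so the bound
holds in any C⋆-algebra: `B² = 4 + [a₀, a₁][b₁, b₀]` and commutators of unitaries have norm at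
most `2`, hence `‖B‖² = ‖B⋆B‖ ≤ 8`. Eigenvalues are bounded by the operator norm.
-/

def chshOperator {R : Type*} [Ring R] (a₀ a₁ b₀ b₁ : R) : R :=
  a₀ * b₀ + a₀ * b₁ + a₁ * b₀ - a₁ * b₁

section CStarRing

variable {R : Type*}

lemma IsSelfAdjoint.mem_unitary_of_mul_self_eq_one [Monoid R] [StarMul R] {a : R}
    (ha : IsSelfAdjoint a) (h : a * a = 1) : a ∈ unitary R :=
  Unitary.mem_iff.mpr ⟨by rw [ha.star_eq, h], by rw [ha.star_eq, h]⟩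

variable {a₀ a₁ b₀ b₁ : R}

lemma chshOperator_mul_self [Ring R] (ha₀ : a₀ * a₀ = 1) (ha₁ : a₁ * a₁ = 1)
    (hb₀ : b₀ * b₀ = 1) (hb₁ : b₁ * b₁ = 1) (h₀₀ : Commute a₀ b₀) (h₀₁ : Commute a₀ b₁)
    (h₁₀ : Commute a₁ b₀) (h₁₁ : Commute a₁ b₁) :
    chshOperator a₀ a₁ b₀ b₁ * chshOperator a₀ a₁ b₀ b₁
      = 4 + (a₀ * a₁ - a₁ * a₀) * (b₁ * b₀ - b₀ * b₁) := by
  simp only [chshOperator, add_mul, mul_add, sub_mul, mul_sub, h₀₀.symm.mul_mul_mul_comm,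
    h₀₁.symm.mul_mul_mul_comm, h₁₀.symm.mul_mul_mul_comm, h₁₁.symm.mul_mul_mul_comm,
    ha₀, ha₁, hb₀, hb₁, one_mul]
  rw [show (4 : R) = 1 + 1 + 1 + 1 by norm_num]
  abel

lemma IsSelfAdjoint.chshOperator [Ring R] [StarRing R] (ha₀ : IsSelfAdjoint a₀)
    (ha₁ : IsSelfAdjoint a₁) (hb₀ : IsSelfAdjoint b₀) (hb₁ : IsSelfAdjoint b₁)
    (h₀₀ : Commute a₀ b₀) (h₀₁ : Commute a₀ b₁) (h₁₀ : Commute a₁ b₀) (h₁₁ : Commute a₁ b₁) :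
    IsSelfAdjoint (chshOperator a₀ a₁ b₀ b₁) :=
  ((((ha₀.commute_iff hb₀).mp h₀₀).add ((ha₀.commute_iff hb₁).mp h₀₁)).add
    ((ha₁.commute_iff hb₀).mp h₁₀)).sub ((ha₁.commute_iff hb₁).mp h₁₁)

variable [NormedRing R] [StarRing R] [CStarRing R] [Nontrivial R]

lemma norm_commutator_le_two {u v : R} (hu : u ∈ unitary R) (hv : v ∈ unitary R) :
    ‖u * v - v * u‖ ≤ 2 := by
  calc ‖u * v - v * u‖ ≤ ‖u * v‖ + ‖v * u‖ := norm_sub_le _ _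
    _ = 2 := by
      rw [CStarRing.norm_mem_unitary_mul _ hu, CStarRing.norm_mem_unitary_mul _ hv,
        CStarRing.norm_of_mem_unitary hu, CStarRing.norm_of_mem_unitary hv]
      norm_num

theorem norm_chshOperator_le (ha₀ : IsSelfAdjoint a₀) (ha₁ : IsSelfAdjoint a₁)
    (hb₀ : IsSelfAdjoint b₀) (hb₁ : IsSelfAdjoint b₁) (ha₀sq : a₀ * a₀ = 1)
    (ha₁sq : a₁ * a₁ = 1) (hb₀sq : b₀ * b₀ = 1) (hb₁sq : b₁ * b₁ = 1) (h₀₀ : Commute a₀ b₀)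
    (h₀₁ : Commute a₀ b₁) (h₁₀ : Commute a₁ b₀) (h₁₁ : Commute a₁ b₁) :
    ‖chshOperator a₀ a₁ b₀ b₁‖ ≤ 2 * Real.sqrt 2 := by
  set B := chshOperator a₀ a₁ b₀ b₁
  have hB := ha₀.chshOperator ha₁ hb₀ hb₁ h₀₀ h₀₁ h₁₀ h₁₁
  have hnorm_sq : ‖B‖ * ‖B‖ ≤ 8 :=
    calc ‖B‖ * ‖B‖ = ‖star B * B‖ := CStarRing.norm_star_mul_self.symm
      _ = ‖4 + (a₀ * a₁ - a₁ * a₀) * (b₁ * b₀ - b₀ * b₁)‖ := by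
        rw [hB.star_eq, chshOperator_mul_self ha₀sq ha₁sq hb₀sq hb₁sq h₀₀ h₀₁ h₁₀ h₁₁]
      _ ≤ ‖(4 : R)‖ + ‖a₀ * a₁ - a₁ * a₀‖ * ‖b₁ * b₀ - b₀ * b₁‖ :=
        (norm_add_le _ _).trans (add_le_add_right (norm_mul_le _ _) _)
      _ ≤ 4 + 2 * 2 := by
        gcongr
        · simpa using Nat.norm_cast_le (α := R) 4
        · exact norm_commutator_le_two (ha₀.mem_unitary_of_mul_self_eq_one ha₀sq)
            (ha₁.mem_unitary_of_mul_self_eq_one ha₁sq)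
        · exact norm_commutator_le_two (hb₁.mem_unitary_of_mul_self_eq_one hb₁sq)
            (hb₀.mem_unitary_of_mul_self_eq_one hb₀sq)
      _ = 8 := by norm_num
  have h_bound_sq : 2 * Real.sqrt 2 * (2 * Real.sqrt 2) = 8 := by
    nlinarith [Real.mul_self_sqrt (show (0 : ℝ) ≤ 2 by norm_num)]
  rwa [mul_self_le_mul_self_iff (norm_nonneg B) (by positivity), h_bound_sq]

end CStarRing

section Kronecker

variable {m n α : Type*}

lemma Matrix.IsHermitian.kronecker [CommSemiring α] [StarRing α] {A : Matrix m m α}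
    {B : Matrix n n α} (hA : A.IsHermitian) (hB : B.IsHermitian) : (A ⊗ₖ B).IsHermitian := by
  rw [IsHermitian, conjTranspose_kronecker, hA.eq, hB.eq]

lemma Matrix.kronecker_mul_self_eq_one [Fintype m] [Fintype n] [DecidableEq m] [DecidableEq n]
    [CommSemiring α] {A : Matrix m m α} {B : Matrix n n α}
    (hA : A * A = 1) (hB : B * B = 1) : A ⊗ₖ B * A ⊗ₖ B = 1 := by
  rw [← mul_kronecker_mul, hA, hB, one_kronecker_one]

lemma Matrix.commute_kronecker_one_one_kronecker [Fintype m] [Fintype n] [DecidableEq m]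
    [DecidableEq n] [CommSemiring α] (A : Matrix m m α) (B : Matrix n n α) : Commute (A ⊗ₖ (1 : Matrix n n α)) ((1 : Matrix m m α) ⊗ₖ B) := by
  simp only [Commute, SemiconjBy, ← mul_kronecker_mul, mul_one, one_mul]

lemma Matrix.kronecker_chsh_eq_chshOperator [Fintype m] [Fintype n] [DecidableEq m]
    [DecidableEq n] [CommRing α] (A₀ A₁ : Matrix m m α) (B₀ B₁ : Matrix n n α) :
    A₀ ⊗ₖ B₀ + A₀ ⊗ₖ B₁ + A₁ ⊗ₖ B₀ - A₁ ⊗ₖ B₁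
      = chshOperator (A₀ ⊗ₖ (1 : Matrix n n α)) (A₁ ⊗ₖ 1) ((1 : Matrix m m α) ⊗ₖ B₀) (1 ⊗ₖ B₁) := by
  simp only [chshOperator, ← mul_kronecker_mul, mul_one, one_mul]

end Kronecker

/-- Tsirelson's bound: the CHSH operator built from Hermitian involutions has all
eigenvalues of modulus at most `2√2`. -/
theorem stmt_15 (A₀ A₁ B₀ B₁ : Matrix (Fin 2) (Fin 2) ℂ)
    (hA₀ : A₀.IsHermitian) (hA₁ : A₁.IsHermitian)
    (hB₀ : B₀.IsHermitian) (hB₁ : B₁.IsHermitian)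
    (hA₀sq : A₀ * A₀ = 1) (hA₁sq : A₁ * A₁ = 1)
    (hB₀sq : B₀ * B₀ = 1) (hB₁sq : B₁ * B₁ = 1) :
    ∀ lam : ℂ,
      Module.End.HasEigenvalue
        (Matrix.toLin' (A₀ ⊗ₖ B₀ + A₀ ⊗ₖ B₁ + A₁ ⊗ₖ B₀ - A₁ ⊗ₖ B₁)) lam →
      ‖lam‖ ≤ 2 * Real.sqrt 2 := by
  open scoped Matrix.Norms.L2Operator in
  intro lam hlam
  rw [kronecker_chsh_eq_chshOperator] at hlam
  have hspec := hlam.mem_spectrum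
  rw [spectrum_toLin'] at hspec
  refine (spectrum.norm_le_norm_of_mem hspec).trans ?_
  have hone : (1 : Matrix (Fin 2) (Fin 2) ℂ) * 1 = 1 := mul_one 1
  exact norm_chshOperator_le (hA₀.kronecker isHermitian_one) (hA₁.kronecker isHermitian_one)
    (isHermitian_one.kronecker hB₀) (isHermitian_one.kronecker hB₁)
    (kronecker_mul_self_eq_one hA₀sq hone) (kronecker_mul_self_eq_one hA₁sq hone)
    (kronecker_mul_self_eq_one hone hB₀sq) (kronecker_mul_self_eq_one hone hB₁sq)
    (commute_kronecker_one_one_kronecker _ _) (commute_kronecker_one_one_kronecker _ _)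
    (commute_kronecker_one_one_kronecker _ _) (commute_kronecker_one_one_kronecker _ _)
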